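/- arXiv:1602.04365 — 7 statements merged into one kernel-verified Lean document; each statement's English description precedes it below -/
import Mathlib

section
/- Let p_1 ≥ p_2 ≥ ... ≥ p_n > 0 be a TS instance, let S = p_{⌈n/2⌉+1} + ... + p_n be the total size of the smaller half of the jobs, and let m = p_{(n+1)/2} if n is odd and m = 0 if n is even. Then every feasible schedule has makespan at least m + 2S; in particular OPT(p) ≥ m + 2S. -/
/-!
Order the jobs by start time. Consecutive jobs `j, j'` start at least `min (p j) (p j')`
apart, so the makespan is at least the sum of these minima plus the size of the last job.
Charging each minimum to the smaller of its two jobs, and the final term to the last job,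
gives every job a weight in `[0, 2]`, with total weight `n`. A weighted sum of the
decreasing sizes with such weights is smallest when weight `2` sits on the `⌊n/2⌋` smallest
jobs and the remaining weight `n - 2⌊n/2⌋ ∈ {0, 1}` on the middle job, which gives `m + 2S`.
-/

/-- A schedule `s` is feasible for the TS instance given by sizes `p 1 ≥ … ≥ p n > 0`:
start times are nonnegative and any two distinct jobs are separated by at least
the smaller of the two sizes. -/
def Feasible (n : ℕ) (p s : ℕ → ℝ) : Prop :=
  (∀ j, 1 ≤ j → j ≤ n → 0 ≤ s j) ∧
  ∀ i j, 1 ≤ i → i ≤ n → 1 ≤ j → j ≤ n → i ≠ j → min (p i) (p j) ≤ |s i - s j|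

/-- The makespan of a schedule: `max_j (s j + p j)` over jobs `1 ≤ j ≤ n`. -/
noncomputable def makespan (n : ℕ) (p s : ℕ → ℝ) : ℝ :=
  sSup ((fun j => s j + p j) '' Set.Icc 1 n)

/-- `OPT`: the infimum of the makespan over all feasible schedules. -/
noncomputable def OPT (n : ℕ) (p : ℕ → ℝ) : ℝ :=
  sInf {T | ∃ s : ℕ → ℝ, Feasible n p s ∧ makespan n p s = T}

open Finset

theorem middle_add_two_mul_sum_le_sum_mul (n : ℕ) (p w : ℕ → ℝ) (hp : AntitoneOn p (Set.Icc 1 n))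
    (hw : ∀ i ∈ Icc 1 n, 0 ≤ w i ∧ w i ≤ 2) (hsum : ∑ i ∈ Icc 1 n, w i = n) :
    (if Odd n then p ((n + 1) / 2) else 0) + 2 * ∑ i ∈ Icc ((n + 1) / 2 + 1) n, p i
      ≤ ∑ i ∈ Icc 1 n, w i * p i := by
  set h := (n + 1) / 2
  have hhn : h ≤ n := by omega
  have hsplit (f : ℕ → ℝ) : ∑ i ∈ Icc 1 n, f i = ∑ i ∈ Ioc 0 h, f i + ∑ i ∈ Ioc h n, f i := by
    rw [sum_Ioc_consecutive _ (Nat.zero_le h) hhn]; rfl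
  rw [hsplit] at hsum ⊢
  rw [Icc_add_one_left_eq_Ioc]
  have hmid : (if Odd n then p h else 0) = (2 * h - n : ℝ) * p h := by
    rcases Nat.even_or_odd n with ⟨k, rfl⟩ | ⟨k, rfl⟩
    · rw [if_neg (Nat.not_odd_iff_even.2 ⟨k, rfl⟩), show h = k by omega]; push_cast; ring
    · rw [if_pos ⟨k, rfl⟩, show h = k + 1 by omega]; push_cast; ring
  have hlow : ∑ i ∈ Ioc 0 h, w i * p h ≤ ∑ i ∈ Ioc 0 h, w i * p i := by
    refine sum_le_sum fun i hi => ?_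
    obtain ⟨hi0, hih⟩ := mem_Ioc.1 hi
    exact mul_le_mul_of_nonneg_left (hp ⟨hi0, by omega⟩ ⟨by omega, hhn⟩ hih)
      (hw i (mem_Icc.2 ⟨hi0, by omega⟩)).1
  have hhigh : ∑ i ∈ Ioc h n, (2 * p i - (2 - w i) * p h) ≤ ∑ i ∈ Ioc h n, w i * p i := by
    refine sum_le_sum fun i hi => ?_
    obtain ⟨hhi, hin⟩ := mem_Ioc.1 hi
    have hpi : p i ≤ p h := hp ⟨by omega, hhn⟩ ⟨by omega, hin⟩ hhi.le
    nlinarith [(hw i (mem_Icc.2 ⟨by omega, hin⟩)).2]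
  rw [← sum_mul] at hlow
  rw [sum_sub_distrib, ← mul_sum, ← sum_mul, sum_sub_distrib, sum_const, Nat.card_Ioc,
    nsmul_eq_mul, Nat.cast_sub hhn] at hhigh
  rw [hmid]
  have hweight : (∑ i ∈ Ioc 0 h, w i) * p h + (∑ i ∈ Ioc h n, w i) * p h = n * p h := by
    rw [← add_mul, hsum]
  linarith

theorem exists_weights_le_start_add_of_separated {ι : Type*} [DecidableEq ι] (p s : ι → ℝ)
    (K : Finset ι) (hK : K.Nonempty) (hs0 : ∀ j ∈ K, 0 ≤ s j)
    (hsep : ∀ i ∈ K, ∀ j ∈ K, i ≠ j → min (p i) (p j) ≤ |s i - s j|) :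
    ∃ ℓ ∈ K, ∃ w : ι → ℝ, (∀ j ∈ K, 0 ≤ w j ∧ w j ≤ 2) ∧ 1 ≤ w ℓ ∧
      ∑ j ∈ K, w j = #K ∧ ∑ j ∈ K, w j * p j ≤ s ℓ + p ℓ := by
  induction K using Finset.induction_on_max_value s with
  | empty => exact absurd hK not_nonempty_empty
  | insert a K haK hmax ih =>
    rcases K.eq_empty_or_nonempty with rfl | hKne
    · exact ⟨a, mem_singleton_self a, fun _ => 1, by simp, le_rfl, by simp,
        by simpa using hs0 a (mem_singleton_self a)⟩
    obtain ⟨ℓ, hℓ, w, hw, hwℓ, hsum, hbound⟩ := ih hKne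
      (fun j hj => hs0 j (mem_insert_of_mem hj))
      (fun i hi j hj => hsep i (mem_insert_of_mem hi) j (mem_insert_of_mem hj))
    have hℓa : ℓ ≠ a := ne_of_mem_of_not_mem hℓ haK
    have hgap : min (p ℓ) (p a) ≤ s a - s ℓ := by
      have := hsep ℓ (mem_insert_of_mem hℓ) a (mem_insert_self a K) hℓa
      rwa [abs_sub_comm, abs_of_nonneg (sub_nonneg.2 (hmax ℓ hℓ))] at this
    obtain ⟨o, ho, hpo⟩ : ∃ o, (o = ℓ ∨ o = a) ∧ p o = min (p ℓ) (p a) := by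
      rcases min_choice (p ℓ) (p a) with h | h
      exacts [⟨ℓ, Or.inl rfl, h.symm⟩, ⟨a, Or.inr rfl, h.symm⟩]
    have hoK : o ∈ insert a K := by rcases ho with rfl | rfl <;> simp [hℓ]
    -- The gap `s a - s ℓ ≥ p o` is charged to `o`, and the final term moves from `ℓ` to `a`.
    set w' : ι → ℝ := fun j => Function.update w a 1 j + (if j = o then 1 else 0) -
      if j = ℓ then 1 else 0
    have hcharge (f : ι → ℝ) :
        ∑ j ∈ insert a K, w' j * f j = f a + ∑ j ∈ K, w j * f j + f o - f ℓ := by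
      simp only [w', sub_mul, add_mul, ite_mul, one_mul, zero_mul, sum_sub_distrib,
        sum_add_distrib]
      rw [sum_ite_eq', sum_ite_eq', if_pos hoK, if_pos (mem_insert_of_mem hℓ), sum_insert haK,
        Function.update_self, one_mul,
        sum_congr rfl fun j hj => by rw [Function.update_of_ne (ne_of_mem_of_not_mem hj haK)]]
    refine ⟨a, mem_insert_self a K, w', ?_, ?_, ?_, ?_⟩
    · intro j hj
      rcases eq_or_ne j a with rfl | hja
      · rcases ho with rfl | rfl <;> norm_num [w', hℓa.symm]
      have hwj := hw j ((mem_insert.1 hj).resolve_left hja)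
      simp only [w', Function.update_of_ne hja]
      rcases ho with rfl | rfl
      · split_ifs <;> constructor <;> linarith
      · rw [if_neg hja]
        split_ifs with hjℓ
        · subst hjℓ; constructor <;> linarith
        · constructor <;> linarith
    · rcases ho with rfl | rfl <;> simp [w', hℓa.symm]
    · simpa [card_insert_of_notMem haK, hsum, add_comm] using hcharge (fun _ => 1)
    · rw [hcharge]; linarith

theorem le_makespan {n : ℕ} {p : ℕ → ℝ} (s : ℕ → ℝ) {j : ℕ} (hj : j ∈ Icc 1 n) :
    s j + p j ≤ makespan n p s :=
  le_csSup ((Set.finite_Icc 1 n).image _).bddAbove ⟨j, by simpa using hj, rfl⟩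

theorem Feasible.middle_add_two_mul_sum_le_makespan {n : ℕ} {p s : ℕ → ℝ} (hs : Feasible n p s)
    (hp : AntitoneOn p (Set.Icc 1 n)) :
    (if Odd n then p ((n + 1) / 2) else 0) + 2 * ∑ i ∈ Icc ((n + 1) / 2 + 1) n, p i
      ≤ makespan n p s := by
  rcases Nat.eq_zero_or_pos n with rfl | hn
  · simp [makespan]
  obtain ⟨hs0, hsep⟩ := hs
  obtain ⟨ℓ, hℓ, w, hw, -, hwsum, hwp⟩ := exists_weights_le_start_add_of_separated p s (Icc 1 n)
    (nonempty_Icc.2 hn) (fun j hj => hs0 j (mem_Icc.1 hj).1 (mem_Icc.1 hj).2)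
    (fun i hi j hj => hsep i j (mem_Icc.1 hi).1 (mem_Icc.1 hi).2 (mem_Icc.1 hj).1 (mem_Icc.1 hj).2)
  calc _ ≤ ∑ i ∈ Icc 1 n, w i * p i :=
        middle_add_two_mul_sum_le_sum_mul n p w hp hw (by simpa using hwsum)
    _ ≤ s ℓ + p ℓ := hwp
    _ ≤ makespan n p s := le_makespan s hℓ

theorem exists_feasible {n : ℕ} {p : ℕ → ℝ} (hpos : ∀ i, 1 ≤ i → i ≤ n → 0 < p i) :
    ∃ s, Feasible n p s := by
  set P := ∑ i ∈ Icc 1 n, p i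
  have hP : 0 ≤ P := sum_nonneg fun i hi => (hpos i (mem_Icc.1 hi).1 (mem_Icc.1 hi).2).le
  refine ⟨fun j => j * P, fun j _ _ => by positivity, fun i j hi hin _ _ hij => ?_⟩
  have hgap : (1 : ℝ) ≤ |(i : ℝ) - j| := by
    exact_mod_cast Int.one_le_abs (sub_ne_zero.2 (Nat.cast_injective.ne hij) : (i : ℤ) - j ≠ 0)
  calc min (p i) (p j) ≤ p i := min_le_left _ _
    _ ≤ P := single_le_sum (fun k hk => (hpos k (mem_Icc.1 hk).1 (mem_Icc.1 hk).2).le)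
        (mem_Icc.2 ⟨hi, hin⟩)
    _ ≤ |(i : ℝ) - j| * P := le_mul_of_one_le_left hP hgap
    _ = |i * P - j * P| := by rw [← sub_mul, abs_mul, abs_of_nonneg hP]

theorem stmt0_general (n : ℕ) (p : ℕ → ℝ)
    (hsort : ∀ i j, 1 ≤ i → i ≤ j → j ≤ n → p j ≤ p i)
    (hpos : ∀ i, 1 ≤ i → i ≤ n → 0 < p i)
    (S m : ℝ)
    (hS : S = ∑ i ∈ Finset.Icc ((n + 1) / 2 + 1) n, p i)
    (hm : m = if Odd n then p ((n + 1) / 2) else 0) :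
    (∀ s : ℕ → ℝ, Feasible n p s → m + 2 * S ≤ makespan n p s) ∧
      m + 2 * S ≤ OPT n p := by
  have hp : AntitoneOn p (Set.Icc 1 n) := fun i hi j hj hij => hsort i j hi.1 hij hj.2
  have hbound (s : ℕ → ℝ) (hs : Feasible n p s) : m + 2 * S ≤ makespan n p s :=
    hS ▸ hm ▸ hs.middle_add_two_mul_sum_le_makespan hp
  obtain ⟨s₀, hs₀⟩ := exists_feasible hpos
  exact ⟨hbound, le_csInf ⟨_, s₀, hs₀, rfl⟩ fun _ ⟨s, hs, hT⟩ => hT ▸ hbound s hs⟩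

/-- every feasible schedule has makespan at least `m + 2S`, where `S` is the
total size of the smaller half of the jobs and `m` is the middle size if `n` is odd;
in particular `OPT p ≥ m + 2S`. -/
theorem stmt0 (n : ℕ) (hn : 1 ≤ n) (p : ℕ → ℝ)
    (hsort : ∀ i j, 1 ≤ i → i ≤ j → j ≤ n → p j ≤ p i)
    (hpos : ∀ i, 1 ≤ i → i ≤ n → 0 < p i)
    (S m : ℝ)
    (hS : S = ∑ i ∈ Finset.Icc ((n + 1) / 2 + 1) n, p i)
    (hm : m = if Odd n then p ((n + 1) / 2) else 0) :
    (∀ s : ℕ → ℝ, Feasible n p s → m + 2 * S ≤ makespan n p s) ∧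
      m + 2 * S ≤ OPT n p :=
  stmt0_general n p hsort hpos S m hS hm
end

section
/- Let p_1 ≥ p_2 ≥ ... ≥ p_n > 0 be real numbers, let S = p_{⌈n/2⌉+1} + ... + p_n, and let m = p_{(n+1)/2} if n is odd and m = 0 if n is even. Then the minimum of a_1 p_1 + ... + a_n p_n over all choices of a_1, ..., a_n ∈ {0, 1, 2} with a_1 + ... + a_n = n equals m + 2S; the minimum is attained by setting a_j = 2 for the smaller half of the indices, a_j = 0 for the larger half, and a_{(n+1)/2} = 1 if n is odd. -/
/-!
Put `k = ⌈n/2⌉` and let `b = halfWeight n` be the claimed optimum (`0` below `k`, `2` above `k`,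
and `1` or `0` at `k` according to the parity of `n`). For any admissible `a` we have
`∑ a = ∑ b = n`, so `∑ a p - ∑ b p = ∑ (a - b)(p - p_k)`. Every term is nonnegative:
below `k` both factors are `≥ 0`, above `k` both are `≤ 0`, and at `k` the second vanishes.
-/

open Finset

theorem sum_mul_le_sum_mul_of_sum_eq {ι : Type*} (s : Finset ι) (a b p : ι → ℝ) (c : ℝ)
    (hsum : ∑ i ∈ s, a i = ∑ i ∈ s, b i) (h : ∀ i ∈ s, 0 ≤ (a i - b i) * (p i - c)) :
    ∑ i ∈ s, b i * p i ≤ ∑ i ∈ s, a i * p i := by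
  have hdiff : ∑ i ∈ s, a i * p i - ∑ i ∈ s, b i * p i = ∑ i ∈ s, (a i - b i) * (p i - c) := by
    simp only [sub_mul, mul_sub, sum_sub_distrib, ← sum_mul, hsum, sub_self, sub_zero]
  linarith [sum_nonneg h]

def halfWeight (n j : ℕ) : ℕ :=
  if (n + 1) / 2 + 1 ≤ j then 2 else if Odd n ∧ j = (n + 1) / 2 then 1 else 0

theorem halfWeight_le_two (n j : ℕ) : halfWeight n j ≤ 2 := by
  unfold halfWeight; split_ifs <;> omega

theorem sum_halfWeight_mul (n : ℕ) (q : ℕ → ℝ) :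
    ∑ j ∈ Icc 1 n, (halfWeight n j : ℝ) * q j
      = (if Odd n then q ((n + 1) / 2) else 0) + 2 * ∑ j ∈ Icc ((n + 1) / 2 + 1) n, q j := by
  set k := (n + 1) / 2
  have hupper : {j ∈ Icc 1 n | k + 1 ≤ j} = Icc (k + 1) n := by
    ext j; simp only [mem_filter, mem_Icc]; omega
  have hmiddle : ∑ j ∈ Icc 1 n, (if Odd n ∧ j = k then q j else 0) = if Odd n then q k else 0 := by
    by_cases hn : Odd n
    · have hk : k ∈ Icc 1 n := by obtain ⟨r, rfl⟩ := hn; simp only [mem_Icc]; omega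
      simp only [hn, true_and, sum_ite_eq', hk, if_true]
    · simp [hn]
  have hsplit : ∀ j, (halfWeight n j : ℝ) * q j
      = (if k + 1 ≤ j then 2 * q j else 0) + (if Odd n ∧ j = k then q j else 0) := by
    intro j; unfold halfWeight; split_ifs <;> first | omega | (push_cast; ring)
  rw [sum_congr rfl fun j _ => hsplit j, sum_add_distrib, hmiddle, ← sum_filter, hupper, mul_sum]
  ring

theorem sum_halfWeight (n : ℕ) : ∑ j ∈ Icc 1 n, halfWeight n j = n := by
  have h := sum_halfWeight_mul n 1
  simp only [Pi.one_apply, mul_one, sum_const, Nat.card_Icc, nsmul_eq_mul] at h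
  have hcount : (if Odd n then 1 else 0) + 2 * (n + 1 - ((n + 1) / 2 + 1)) = n := by
    split_ifs with hn
    · obtain ⟨r, rfl⟩ := hn; omega
    · obtain ⟨r, rfl⟩ := Nat.not_odd_iff_even.mp hn; omega
  have hreal : ((∑ j ∈ Icc 1 n, halfWeight n j : ℕ) : ℝ) = n := by
    rw [Nat.cast_sum, h]
    conv_rhs => rw [← hcount]
    push_cast
    rfl
  exact_mod_cast hreal

theorem halfWeight_exchange_nonneg (n : ℕ) (p : ℕ → ℝ)
    (hsort : ∀ i j, 1 ≤ i → i ≤ j → j ≤ n → p j ≤ p i) {a j : ℕ} (hj : j ∈ Icc 1 n)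
    (ha : a ≤ 2) :
    0 ≤ ((a : ℝ) - halfWeight n j) * (p j - p ((n + 1) / 2)) := by
  rw [mem_Icc] at hj
  set k := (n + 1) / 2
  rcases lt_trichotomy j k with hjk | rfl | hkj
  · have hw : halfWeight n j = 0 := by unfold halfWeight; split_ifs <;> omega
    rw [hw, Nat.cast_zero, sub_zero]
    exact mul_nonneg a.cast_nonneg (sub_nonneg.2 (hsort j k hj.1 hjk.le (by omega)))
  · simp
  · have hw : halfWeight n j = 2 := by unfold halfWeight; rw [if_pos (by omega)]
    rw [hw]
    refine mul_nonneg_of_nonpos_of_nonpos ?_ (sub_nonpos.2 (hsort k j (by omega) hkj.le hj.2))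
    rw [sub_nonpos]; exact_mod_cast ha

theorem stmt2_general (n : ℕ) (p : ℕ → ℝ)
    (hsort : ∀ i j, 1 ≤ i → i ≤ j → j ≤ n → p j ≤ p i)
    (S m : ℝ)
    (hS : S = ∑ i ∈ Finset.Icc ((n + 1) / 2 + 1) n, p i)
    (hm : m = if Odd n then p ((n + 1) / 2) else 0) :
    IsLeast {v : ℝ | ∃ a : ℕ → ℕ,
        (∀ j ∈ Finset.Icc 1 n, a j ≤ 2) ∧
        (∑ j ∈ Finset.Icc 1 n, a j) = n ∧
        v = ∑ j ∈ Finset.Icc 1 n, (a j : ℝ) * p j}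
      (m + 2 * S) ∧
    (∑ j ∈ Finset.Icc 1 n,
        ((if (n + 1) / 2 + 1 ≤ j then (2 : ℝ)
          else if Odd n ∧ j = (n + 1) / 2 then 1 else 0) * p j)) = m + 2 * S := by
  have hval : ∑ j ∈ Icc 1 n, (halfWeight n j : ℝ) * p j = m + 2 * S := by
    rw [sum_halfWeight_mul, hm, hS]
  refine ⟨⟨⟨halfWeight n, fun j _ => halfWeight_le_two n j, sum_halfWeight n, hval.symm⟩, ?_⟩, ?_⟩
  · rintro v ⟨a, ha, hsum, rfl⟩
    rw [← hval]
    refine sum_mul_le_sum_mul_of_sum_eq _ _ _ p (p ((n + 1) / 2)) ?_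
      fun j hj => halfWeight_exchange_nonneg n p hsort hj (ha j hj)
    rw [← Nat.cast_sum, ← Nat.cast_sum, hsum, sum_halfWeight]
  · rw [← hval]
    refine sum_congr rfl fun j _ => ?_
    unfold halfWeight
    push_cast
    rfl

/-- for `p 1 ≥ … ≥ p n > 0`, the minimum of `∑ a j * p j` over weights
`a j ∈ {0,1,2}` with `∑ a j = n` equals `m + 2S` (with `S` the total size of the smaller
half and `m` the middle size if `n` is odd); moreover the minimum is attained by the
assignment giving `2` to the smaller half, `1` to the middle index if `n` is odd, and `0`
to the larger half. -/
theorem stmt2 (n : ℕ) (hn : 1 ≤ n) (p : ℕ → ℝ)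
    (hsort : ∀ i j, 1 ≤ i → i ≤ j → j ≤ n → p j ≤ p i)
    (hpos : ∀ i, 1 ≤ i → i ≤ n → 0 < p i)
    (S m : ℝ)
    (hS : S = ∑ i ∈ Finset.Icc ((n + 1) / 2 + 1) n, p i)
    (hm : m = if Odd n then p ((n + 1) / 2) else 0) :
    IsLeast {v : ℝ | ∃ a : ℕ → ℕ,
        (∀ j ∈ Finset.Icc 1 n, a j ≤ 2) ∧
        (∑ j ∈ Finset.Icc 1 n, a j) = n ∧
        v = ∑ j ∈ Finset.Icc 1 n, (a j : ℝ) * p j}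
      (m + 2 * S) ∧
    (∑ j ∈ Finset.Icc 1 n,
        ((if (n + 1) / 2 + 1 ≤ j then (2 : ℝ)
          else if Odd n ∧ j = (n + 1) / 2 then 1 else 0) * p j)) = m + 2 * S :=
  stmt2_general n p hsort S m hS hm
end

section
/- Let p_1 ≥ p_2 ≥ ... ≥ p_n > 0 be a TS instance. For every j with 1 ≤ j ≤ n, every element of the Greedy gap multiset G_j is at least p_j. -/
/-- The multiset of gaps maintained by Greedy: `G 1 = {p 1}`, and `G (j+1)` is obtained
from `G j` by removing a maximum element `x` and inserting `p (j+1)` and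
`max (p (j+1)) (x - p (j+1))`. (For positive instances `fold max 0` is the maximum.) -/
noncomputable def greedyGaps (p : ℕ → ℝ) : ℕ → Multiset ℝ
  | 0 => 0
  | 1 => {p 1}
  | (j + 2) =>
      let G := greedyGaps p (j + 1)
      let x := G.fold max 0
      p (j + 2) ::ₘ max (p (j + 2)) (x - p (j + 2)) ::ₘ G.erase x

theorem mem_greedyGaps_one {p : ℕ → ℝ} {x : ℝ} (hx : x ∈ greedyGaps p 1) : x = p 1 := by
  simpa [greedyGaps] using hx

theorem mem_greedyGaps_succ_succ {p : ℕ → ℝ} {j : ℕ} {x : ℝ} (hx : x ∈ greedyGaps p (j + 2)) :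
    p (j + 2) ≤ x ∨ x ∈ greedyGaps p (j + 1) := by
  rw [greedyGaps] at hx
  rcases Multiset.mem_cons.1 hx with rfl | hx
  · exact .inl le_rfl
  rcases Multiset.mem_cons.1 hx with rfl | hx
  · exact .inl (le_max_left _ _)
  · exact .inr (Multiset.mem_of_mem_erase hx)

theorem stmt3_general (n : ℕ) (p : ℕ → ℝ)
    (hsort : ∀ i j, 1 ≤ i → i ≤ j → j ≤ n → p j ≤ p i) :
    ∀ j, 1 ≤ j → j ≤ n → ∀ x ∈ greedyGaps p j, p j ≤ x := by
  intro j hj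
  induction j, hj using Nat.le_induction with
  | base => exact fun _ x hx => (mem_greedyGaps_one hx).ge
  | succ k hk ih =>
    intro hkn x hx
    obtain ⟨m, rfl⟩ : ∃ m, k = m + 1 := ⟨k - 1, by omega⟩
    rcases mem_greedyGaps_succ_succ hx with hle | hmem
    · exact hle
    · exact (hsort (m + 1) (m + 2) hk (by omega) hkn).trans (ih (by omega) x hmem)

/-- after Greedy has placed job `j`, every gap has size at least `p j`. -/
theorem stmt3 (n : ℕ) (hn : 1 ≤ n) (p : ℕ → ℝ)
    (hsort : ∀ i j, 1 ≤ i → i ≤ j → j ≤ n → p j ≤ p i)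
    (hpos : ∀ i, 1 ≤ i → i ≤ n → 0 < p i) :
    ∀ j, 1 ≤ j → j ≤ n → ∀ x ∈ greedyGaps p j, p j ≤ x :=
  stmt3_general n p hsort
end

section
/- Let p_1 ≥ p_2 ≥ ... ≥ p_n > 0 be a TS instance such that all sizes are within a factor of two, i.e., p_1 ≤ 2 p_n. Then p_1 + p_2 + ... + p_n ≤ (3/2) · OPT(p). -/
/-!
Order the jobs by start time. Consecutive jobs `a`, `b` are at least `min (p a) (p b)` apart,
and when all sizes lie in `[P/2, P]` this minimum is at least `(p a + p b) / 3`. Summing over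
the chain, the last job starts no earlier than `(2 Σ p - p_first - p_last) / 3`, and it ends
`p_last ≥ P/2 ≥ p_first/2` later, which gives a makespan of at least `(2/3) Σ p`.
-/

open Finset

lemma add_le_three_mul_min {a b : ℝ} (hab : a ≤ 2 * b) (hba : b ≤ 2 * a) :
    a + b ≤ 3 * min a b := by
  rcases le_total a b with h | h
  · rw [min_eq_left h]; linarith
  · rw [min_eq_right h]; linarith

lemma feasible_mul_sum_abs (n : ℕ) (p : ℕ → ℝ) :
    Feasible n p (fun j => j * ∑ i ∈ Icc 1 n, |p i|) := by
  set d := ∑ i ∈ Icc 1 n, |p i|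
  have hd : 0 ≤ d := sum_nonneg fun i _ => abs_nonneg (p i)
  refine ⟨fun j _ _ => by positivity, fun i j hi hin _ _ hij => ?_⟩
  have hgap : (1 : ℝ) ≤ |(i : ℝ) - j| := by
    exact_mod_cast Int.one_le_abs (sub_ne_zero.mpr (Int.natCast_inj.not.mpr hij))
  calc min (p i) (p j) ≤ |p i| := (min_le_left _ _).trans (le_abs_self _)
    _ ≤ d := single_le_sum (fun k _ => abs_nonneg (p k)) (mem_Icc.mpr ⟨hi, hin⟩)
    _ ≤ |(i : ℝ) - j| * d := le_mul_of_one_le_left hd hgap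
    _ = |i * d - j * d| := by rw [← sub_mul, abs_mul, abs_of_nonneg hd]

lemma le_OPT_of_forall_feasible {n : ℕ} {p : ℕ → ℝ} {b : ℝ}
    (h : ∀ s, Feasible n p s → b ≤ makespan n p s) : b ≤ OPT n p :=
  le_csInf ⟨_, _, feasible_mul_sum_abs n p, rfl⟩ fun _ ⟨s, hs, hT⟩ => hT ▸ h s hs

/-- The chain bound for the job `m` started last, built up by adding jobs in order of start time. -/
lemma exists_last_start_bound (J : Finset ℕ) (p s : ℕ → ℝ) (P : ℝ)
    (hs : ∀ i ∈ J, 0 ≤ s i)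
    (hsep : ∀ i ∈ J, ∀ j ∈ J, i ≠ j → min (p i) (p j) ≤ |s i - s j|)
    (hle : ∀ i ∈ J, p i ≤ P) (hge : ∀ i ∈ J, P ≤ 2 * p i) (hJ : J.Nonempty) :
    ∃ m ∈ J, (∀ i ∈ J, s i ≤ s m) ∧ 2 * ∑ i ∈ J, p i ≤ 3 * s m + p m + P := by
  induction J using Finset.induction_on_max_value s with
  | empty => exact absurd hJ not_nonempty_empty
  | insert a J haJ hmax ih =>
    refine ⟨a, mem_insert_self a J, ?_, ?_⟩
    · simpa using hmax
    rw [sum_insert haJ]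
    have ha := mem_insert_self a J
    rcases J.eq_empty_or_nonempty with rfl | hJ'
    · simp only [sum_empty]
      linarith [hs a ha, hle a ha]
    have sub : ∀ {i}, i ∈ J → i ∈ insert a J := mem_insert_of_mem
    obtain ⟨m, hm, -, hbound⟩ := ih (fun i hi => hs i (sub hi))
      (fun i hi j hj => hsep i (sub hi) j (sub hj)) (fun i hi => hle i (sub hi))
      (fun i hi => hge i (sub hi)) hJ'
    have hgap : min (p a) (p m) ≤ s a - s m := by
      have h := hsep a ha m (sub hm) (ne_of_mem_of_not_mem hm haJ).symm
      rwa [abs_of_nonneg (sub_nonneg.mpr (hmax m hm))] at h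
    have hmin := add_le_three_mul_min (a := p a) (b := p m)
      ((hle a ha).trans (hge m (sub hm))) ((hle m (sub hm)).trans (hge a ha))
    linarith

lemma two_mul_sum_le_three_mul_makespan {n : ℕ} {p s : ℕ → ℝ} (P : ℝ)
    (hf : Feasible n p s) (hle : ∀ i ∈ Icc 1 n, p i ≤ P) (hge : ∀ i ∈ Icc 1 n, P ≤ 2 * p i) :
    2 * ∑ i ∈ Icc 1 n, p i ≤ 3 * makespan n p s := by
  rcases (Icc 1 n).eq_empty_or_nonempty with hJ | hJ
  · have hn : n = 0 := by simpa using hJ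
    subst hn
    simp [makespan]
  obtain ⟨hs, hsep⟩ := hf
  obtain ⟨m, hm, -, hbound⟩ := exists_last_start_bound (Icc 1 n) p s P
    (fun i hi => hs i (mem_Icc.mp hi).1 (mem_Icc.mp hi).2)
    (fun i hi j hj => hsep i j (mem_Icc.mp hi).1 (mem_Icc.mp hi).2 (mem_Icc.mp hj).1
      (mem_Icc.mp hj).2) hle hge hJ
  have hend : s m + p m ≤ makespan n p s :=
    le_csSup ((Set.finite_Icc 1 n).image _).bddAbove ⟨m, by simpa using hm, rfl⟩
  linarith [hge m hm]

theorem stmt4_general (n : ℕ) (p : ℕ → ℝ)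
    (hsort : ∀ i j, 1 ≤ i → i ≤ j → j ≤ n → p j ≤ p i)
    (hratio : p 1 ≤ 2 * p n) :
    (∑ i ∈ Finset.Icc 1 n, p i) ≤ 3 / 2 * OPT n p := by
  have hle : ∀ i ∈ Icc 1 n, p i ≤ p 1 := fun i hi =>
    hsort 1 i le_rfl (mem_Icc.mp hi).1 (mem_Icc.mp hi).2
  have hge : ∀ i ∈ Icc 1 n, p 1 ≤ 2 * p i := fun i hi =>
    hratio.trans (by linarith [hsort i n (mem_Icc.mp hi).1 (mem_Icc.mp hi).2 le_rfl])
  have hOPT : 2 / 3 * ∑ i ∈ Icc 1 n, p i ≤ OPT n p := le_OPT_of_forall_feasible fun s hs => by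
    linarith [two_mul_sum_le_three_mul_makespan (p 1) hs hle hge]
  linarith

/-- if all sizes are within a factor of two (`p 1 ≤ 2 * p n`), then the
total size is at most `(3/2) · OPT p`. -/
theorem stmt4 (n : ℕ) (hn : 1 ≤ n) (p : ℕ → ℝ)
    (hsort : ∀ i j, 1 ≤ i → i ≤ j → j ≤ n → p j ≤ p i)
    (hpos : ∀ i, 1 ≤ i → i ≤ n → 0 < p i)
    (hratio : p 1 ≤ 2 * p n) :
    (∑ i ∈ Finset.Icc 1 n, p i) ≤ 3 / 2 * OPT n p :=
  stmt4_general n p hsort hratio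
end

section
/- Let p_1 ≥ p_2 ≥ ... ≥ p_n > 0 be a TS instance. For every j with 1 ≤ j ≤ n, there exists a feasible schedule for the instance p_1, ..., p_j whose multiset of gaps (the differences between consecutive start times in sorted order, together with the difference between the last start time and the makespan) equals the Greedy gap multiset G_j; in particular, there exists a feasible schedule for p_1, ..., p_n whose makespan equals the sum of the elements of G_n. -/
/-- The multiset of gaps of a schedule: the differences between consecutive start times
in sorted order, together with the difference between the last start time and the
makespan. -/
noncomputable def gapMultiset (n : ℕ) (p s : ℕ → ℝ) : Multiset ℝ :=
  let l := ((Finset.Icc 1 n).val.map s).sort (· ≤ ·)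
  ↑(List.zipWith (fun u v => v - u) l (l.drop 1 ++ [makespan n p s]))

section GapList

variable {α : Type*} [AddCommGroup α]

def gapList : List α → α → List α
  | [], _ => []
  | a :: t, M => (t.headD M - a) :: gapList t M

@[simp] theorem gapList_nil (M : α) : gapList [] M = [] := rfl

@[simp] theorem gapList_cons (a : α) (t : List α) (M : α) :
    gapList (a :: t) M = (t.headD M - a) :: gapList t M := rfl

theorem gapList_append (l₁ l₂ : List α) (M : α) :
    gapList (l₁ ++ l₂) M = gapList l₁ (l₂.headD M) ++ gapList l₂ M := by
  induction l₁ with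
  | nil => rfl
  | cons a t ih => cases t <;> simp_all

theorem gapList_map_add (l : List α) (M c : α) :
    gapList (l.map (· + c)) (M + c) = gapList l M := by
  induction l with
  | nil => rfl
  | cons a t ih => simp [ih]

theorem sum_gapList (l : List α) (M : α) : (gapList l M).sum = M - l.headD M := by
  induction l with
  | nil => simp
  | cons a t ih => simp [ih]

theorem gapList_eq_zipWith (l : List α) (M : α) :
    gapList l M = List.zipWith (fun u v => v - u) l (l.drop 1 ++ [M]) := by
  induction l with
  | nil => rfl
  | cons a t ih => cases t <;> simp_all

theorem exists_eq_of_mem_gapList {l : List α} {M x : α} (hx : x ∈ gapList l M) :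
    ∃ l₁ u R, l = l₁ ++ u :: R ∧ x = R.headD M - u := by
  induction l with
  | nil => simp at hx
  | cons a t ih =>
    rcases List.mem_cons.mp hx with rfl | hx
    · exact ⟨[], a, t, rfl, rfl⟩
    · obtain ⟨l₁, u, R, rfl, rfl⟩ := ih hx
      exact ⟨a :: l₁, u, R, rfl, rfl⟩

theorem gapList_insert (l₁ R : List α) (u w M δ : α) :
    gapList (l₁ ++ u :: w :: R.map (· + δ)) (M + δ)
      = gapList l₁ u ++ (w - u) :: (R.headD M + δ - w) :: gapList R M := by
  cases R <;> simp [gapList_append, gapList_map_add]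

end GapList

theorem gapList_pos {α : Type*} [AddCommGroup α] [LinearOrder α] [IsOrderedAddMonoid α]
    {l : List α} {M : α} (hl : l.Pairwise (· < ·)) (hM : ∀ a ∈ l, a < M) :
    ∀ x ∈ gapList l M, 0 < x := by
  intro x hx
  obtain ⟨l₁, u, R, rfl, rfl⟩ := exists_eq_of_mem_gapList hx
  rw [sub_pos]
  cases R with
  | nil => exact hM u (by simp)
  | cons v R => exact List.rel_of_pairwise_cons (List.pairwise_append.mp hl).2.1 List.mem_cons_self

theorem Multiset.fold_max_mem {α : Type*} [LinearOrder α] {m : Multiset α} {b : α}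
    (hm : m ≠ 0) (hb : ∀ a ∈ m, b ≤ a) : m.fold max b ∈ m := by
  induction m using Multiset.induction_on with
  | empty => exact absurd rfl hm
  | cons a t ih =>
    rw [Multiset.fold_cons_left]
    rcases eq_or_ne t 0 with rfl | ht
    · simp [hb a (Multiset.mem_cons_self a 0)]
    · rcases max_choice a (t.fold max b) with h | h <;> rw [h]
      · exact Multiset.mem_cons_self a t
      · exact Multiset.mem_cons_of_mem (ih ht fun c hc => hb c (Multiset.mem_cons_of_mem hc))

theorem headD_le_of_lt_of_mem {α : Type*} [LinearOrder α] {l₁ R : List α} {u a M : α}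
    (hl : (l₁ ++ u :: R).Pairwise (· < ·)) (ha : a ∈ l₁ ++ u :: R) (hua : u < a) :
    R.headD M ≤ a := by
  obtain ⟨-, huR, hl₁u⟩ := List.pairwise_append.mp hl
  simp only [List.mem_append, List.mem_cons] at ha
  rcases ha with ha | rfl | ha
  · exact absurd (hl₁u a ha u List.mem_cons_self) hua.not_gt
  · exact absurd hua (lt_irrefl _)
  · cases R with
    | nil => simp at ha
    | cons c R =>
      rcases List.mem_cons.mp ha with rfl | ha
      · exact le_rfl
      · exact (List.rel_of_pairwise_cons (List.pairwise_cons.mp huR).2 ha).le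

theorem pairwise_insert_map_add {l₁ R : List ℝ} {u w δ : ℝ}
    (hl : (l₁ ++ u :: R).Pairwise (· < ·))
    (huw : u < w) (hwR : ∀ b ∈ R, w < b + δ) :
    (l₁ ++ u :: w :: R.map (· + δ)).Pairwise (· < ·) := by
  obtain ⟨hl₁, huR, hl₁u⟩ := List.pairwise_append.mp hl
  obtain ⟨-, hR⟩ := List.pairwise_cons.mp huR
  have hwR' : ∀ b ∈ R.map (· + δ), w < b := by simpa using hwR
  refine List.pairwise_append.mpr ⟨hl₁, ?_, fun a ha => ?_⟩
  · refine List.pairwise_cons.mpr ⟨?_, List.pairwise_cons.mpr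
      ⟨hwR', List.pairwise_map.mpr (hR.imp fun hbc => by linarith)⟩⟩
    rintro b (_ | ⟨_, hb⟩)
    exacts [huw, huw.trans (hwR' b hb)]
  · have hau := hl₁u a ha u List.mem_cons_self
    rintro b (_ | ⟨_, _ | ⟨_, hb⟩⟩)
    exacts [hau, hau.trans huw, (hau.trans huw).trans (hwR' b hb)]

section Shift

noncomputable def shiftAbove (u δ t : ℝ) : ℝ := if u < t then t + δ else t

variable {u δ t : ℝ}

theorem shiftAbove_of_le (h : t ≤ u) : shiftAbove u δ t = t := if_neg h.not_gt

theorem shiftAbove_of_lt (h : u < t) : shiftAbove u δ t = t + δ := if_pos h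

theorem le_shiftAbove (hδ : 0 ≤ δ) : t ≤ shiftAbove u δ t := by
  unfold shiftAbove; split_ifs <;> linarith

theorem shiftAbove_le (hδ : 0 ≤ δ) : shiftAbove u δ t ≤ t + δ := by
  unfold shiftAbove; split_ifs <;> linarith

theorem abs_sub_le_abs_shiftAbove_sub (hδ : 0 ≤ δ) (a b : ℝ) :
    |a - b| ≤ |shiftAbove u δ a - shiftAbove u δ b| := by
  wlog hab : b ≤ a generalizing a b
  · simpa only [abs_sub_comm] using this b a (le_of_not_ge hab)
  have hstretch : a - b ≤ shiftAbove u δ a - shiftAbove u δ b := by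
    unfold shiftAbove; split_ifs <;> linarith
  exact (abs_of_nonneg (sub_nonneg.mpr hab)).trans_le (hstretch.trans (le_abs_self _))

theorem map_shiftAbove {l₁ R : List ℝ} (hl : (l₁ ++ u :: R).Pairwise (· < ·)) :
    (l₁ ++ u :: R).map (shiftAbove u δ) = l₁ ++ u :: R.map (· + δ) := by
  obtain ⟨-, huR, hl₁u⟩ := List.pairwise_append.mp hl
  simp only [List.map_append, List.map_cons, shiftAbove_of_le le_rfl]
  congr 2
  · exact (List.map_congr_left (g := id) fun a ha =>
      shiftAbove_of_le (hl₁u a ha u List.mem_cons_self).le).trans (List.map_id _)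
  · exact List.map_congr_left fun b hb => shiftAbove_of_lt (List.rel_of_pairwise_cons huR hb)

end Shift

section Feasible

variable {n : ℕ} {p s : ℕ → ℝ}

theorem Feasible.comp (h : Feasible n p s) {f : ℝ → ℝ} (hf₀ : ∀ t, 0 ≤ t → 0 ≤ f t)
    (hf : ∀ a b, |a - b| ≤ |f a - f b|) : Feasible n p (f ∘ s) :=
  ⟨fun i hi₁ hi₂ => hf₀ _ (h.1 i hi₁ hi₂),
    fun i k hi₁ hi₂ hk₁ hk₂ hik => (h.2 i k hi₁ hi₂ hk₁ hk₂ hik).trans (hf _ _)⟩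

theorem Feasible.update_succ (h : Feasible n p s) {t : ℝ} (ht : 0 ≤ t)
    (hfar : ∀ i, 1 ≤ i → i ≤ n → p (n + 1) ≤ |s i - t|) :
    Feasible (n + 1) p (Function.update s (n + 1) t) := by
  have hold : ∀ i ≤ n, Function.update s (n + 1) t i = s i := fun i hi =>
    Function.update_of_ne (by omega) _ _
  have hnew : ∀ i, 1 ≤ i → i ≤ n → min (p i) (p (n + 1)) ≤ |s i - t| := fun i hi₁ hi₂ =>
    (min_le_right _ _).trans (hfar i hi₁ hi₂)
  refine ⟨fun i hi₁ hi₂ => ?_, fun i k hi₁ hi₂ hk₁ hk₂ hik => ?_⟩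
  · rcases Nat.le_add_one_iff.mp hi₂ with hi₂ | rfl
    · rw [hold i hi₂]; exact h.1 i hi₁ hi₂
    · rwa [Function.update_self]
  · rcases Nat.le_add_one_iff.mp hi₂ with hi₂ | rfl <;>
      rcases Nat.le_add_one_iff.mp hk₂ with hk₂ | rfl
    · rw [hold i hi₂, hold k hk₂]; exact h.2 i k hi₁ hi₂ hk₁ hk₂ hik
    · rw [hold i hi₂, Function.update_self]; exact hnew i hi₁ hi₂
    · rw [hold k hk₂, Function.update_self, min_comm, abs_sub_comm]; exact hnew k hk₁ hk₂
    · exact absurd rfl hik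

end Feasible

structure SortedSchedule (p : ℕ → ℝ) (j : ℕ) (s : ℕ → ℝ) (l : List ℝ) (M : ℝ) : Prop where
  feasible : Feasible j p s
  map_eq : (Finset.Icc 1 j).val.map s = l
  sorted : l.Pairwise (· < ·)
  head?_eq : l.head? = some 0
  completion_le : ∀ i ∈ Finset.Icc 1 j, s i + p i ≤ M
  -- Since a last-starting job attains `M`, delaying the later jobs delays `M` by as much.
  exists_last : ∃ k ∈ Finset.Icc 1 j, s k + p k = M ∧ ∀ a ∈ l, a ≤ s k

namespace SortedSchedule

variable {p : ℕ → ℝ} {j : ℕ} {s : ℕ → ℝ} {l : List ℝ} {M : ℝ}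

theorem single (p : ℕ → ℝ) : SortedSchedule p 1 (fun _ => 0) [0] (p 1) where
  feasible := ⟨fun _ _ _ => le_rfl, fun i k _ hi₂ _ hk₂ hik => absurd (by omega) hik⟩
  map_eq := by simp
  sorted := List.pairwise_singleton _ _
  head?_eq := rfl
  completion_le i hi := by rw [Finset.mem_Icc] at hi; rw [show i = 1 by omega]; simp
  exists_last := ⟨1, by simp, by simp, by simp⟩

theorem mem_iff (h : SortedSchedule p j s l M) {a : ℝ} :
    a ∈ l ↔ ∃ i ∈ Finset.Icc 1 j, s i = a := by
  rw [← Multiset.mem_coe, ← h.map_eq, Multiset.mem_map]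
  rfl

theorem apply_mem (h : SortedSchedule p j s l M) {i : ℕ} (hi : i ∈ Finset.Icc 1 j) : s i ∈ l :=
  h.mem_iff.mpr ⟨i, hi, rfl⟩

theorem nonneg (h : SortedSchedule p j s l M) {a : ℝ} (ha : a ∈ l) : 0 ≤ a := by
  obtain ⟨i, hi, rfl⟩ := h.mem_iff.mp ha
  rw [Finset.mem_Icc] at hi
  exact h.feasible.1 i hi.1 hi.2

theorem makespan_eq (h : SortedSchedule p j s l M) : makespan j p s = M := by
  obtain ⟨k, hk, hkM, -⟩ := h.exists_last
  refine IsGreatest.csSup_eq ⟨⟨k, by simpa using hk, hkM⟩, ?_⟩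
  rintro _ ⟨i, hi, rfl⟩
  exact h.completion_le i (by simpa using hi)

theorem gapMultiset_eq (h : SortedSchedule p j s l M) : gapMultiset j p s = gapList l M := by
  have hsort : ((Finset.Icc 1 j).val.map s).sort (· ≤ ·) = l := by
    rw [h.map_eq, Multiset.coe_sort, List.mergeSort_eq_self _ (h.sorted.imp le_of_lt)]
  simp only [gapMultiset, hsort, h.makespan_eq, gapList_eq_zipWith]

theorem sum_gapList (h : SortedSchedule p j s l M) : (gapList l M).sum = M := by
  obtain ⟨t, rfl⟩ := List.head?_eq_some_iff.mp h.head?_eq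
  simp [_root_.sum_gapList]

theorem lt_of_mem (h : SortedSchedule p j s l M) (hpos : ∀ i ∈ Finset.Icc 1 j, 0 < p i)
    {a : ℝ} (ha : a ∈ l) : a < M := by
  obtain ⟨k, hk, rfl, hlast⟩ := h.exists_last
  linarith [hlast a ha, hpos k hk]

theorem gapList_pos (h : SortedSchedule p j s l M) (hpos : ∀ i ∈ Finset.Icc 1 j, 0 < p i) :
    ∀ x ∈ gapList l M, 0 < x :=
  _root_.gapList_pos h.sorted fun _ => h.lt_of_mem hpos

theorem feasible_insert {l₁ R : List ℝ} {u : ℝ} (h : SortedSchedule p j s (l₁ ++ u :: R) M)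
    (hq : 0 ≤ p (j + 1)) {g δ : ℝ} (hg : p (j + 1) ≤ g) (hδ : 0 ≤ δ)
    (hv : R.headD M + δ = u + g + p (j + 1)) :
    Feasible (j + 1) p (Function.update (shiftAbove u δ ∘ s) (j + 1) (u + g)) := by
  have hu : 0 ≤ u := h.nonneg (by simp)
  refine (h.feasible.comp (fun t ht => ht.trans (le_shiftAbove hδ))
    (abs_sub_le_abs_shiftAbove_sub hδ)).update_succ (by linarith) fun i hi₁ hi₂ => ?_
  have hsi := h.apply_mem (Finset.mem_Icc.mpr ⟨hi₁, hi₂⟩)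
  rw [Function.comp_apply]
  rcases le_or_gt (s i) u with hle | hlt
  · rw [shiftAbove_of_le hle, abs_sub_comm]
    exact le_trans (by linarith) (le_abs_self _)
  · have := headD_le_of_lt_of_mem (M := M) h.sorted hsi hlt
    rw [shiftAbove_of_lt hlt]
    exact le_trans (by linarith) (le_abs_self _)

theorem exists_last_insert {l₁ R : List ℝ} {u : ℝ} (h : SortedSchedule p j s (l₁ ++ u :: R) M)
    (hq : 0 ≤ p (j + 1)) {g δ : ℝ} (hg : p (j + 1) ≤ g)
    (hv : R.headD M + δ = u + g + p (j + 1)) :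
    ∃ k ∈ Finset.Icc 1 (j + 1),
      Function.update (shiftAbove u δ ∘ s) (j + 1) (u + g) k + p k = M + δ ∧
      ∀ a ∈ l₁ ++ u :: (u + g) :: R.map (· + δ),
        a ≤ Function.update (shiftAbove u δ ∘ s) (j + 1) (u + g) k := by
  obtain ⟨-, huR, hl₁u⟩ := List.pairwise_append.mp h.sorted
  cases R with
  | nil =>
    refine ⟨j + 1, by simp, ?_, ?_⟩ <;> rw [Function.update_self]
    · simp only [List.headD_nil] at hv
      linarith
    simp only [List.map_nil, List.mem_append, List.mem_cons, List.not_mem_nil, or_false]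
    rintro a (ha | rfl | rfl)
    · linarith [hl₁u a ha u List.mem_cons_self]
    · linarith
    · exact le_rfl
  | cons c R =>
    obtain ⟨k, hk, hkM, hlast⟩ := h.exists_last
    have hk' := Finset.mem_Icc.mp hk
    have hck : u < s k := (List.rel_of_pairwise_cons huR (by simp)).trans_le (hlast c (by simp))
    refine ⟨k, Finset.mem_Icc.mpr ⟨hk'.1, by omega⟩, ?_, ?_⟩ <;>
      rw [Function.update_of_ne (by omega), Function.comp_apply, shiftAbove_of_lt hck]
    · linarith
    simp only [List.headD_cons] at hv
    simp only [List.mem_append, List.mem_cons, List.mem_map]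
    rintro a (ha | rfl | rfl | ⟨b, hb, rfl⟩)
    · linarith [hl₁u a ha u List.mem_cons_self, hlast c (by simp)]
    · linarith [hlast c (by simp)]
    · linarith [hlast c (by simp)]
    · linarith [hlast b (by simp [hb])]

theorem insert {l₁ R : List ℝ} {u : ℝ} (h : SortedSchedule p j s (l₁ ++ u :: R) M)
    (hq : 0 < p (j + 1)) (hqle : ∀ i ∈ Finset.Icc 1 j, p (j + 1) ≤ p i)
    {g δ : ℝ} (hg : p (j + 1) ≤ g) (hδ : 0 ≤ δ) (hv : R.headD M + δ = u + g + p (j + 1)) :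
    SortedSchedule p (j + 1) (Function.update (shiftAbove u δ ∘ s) (j + 1) (u + g))
      (l₁ ++ u :: (u + g) :: R.map (· + δ)) (M + δ) := by
  have hpos : ∀ i ∈ Finset.Icc 1 j, 0 < p i := fun i hi => hq.trans_le (hqle i hi)
  have hold : ∀ i ≤ j, Function.update (shiftAbove u δ ∘ s) (j + 1) (u + g) i
      = (shiftAbove u δ ∘ s) i := fun i hi => Function.update_of_ne (by omega) _ _
  have hvM : R.headD M ≤ M := by
    cases R with
    | nil => exact le_rfl
    | cons c R => exact (h.lt_of_mem hpos (by simp)).le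
  refine ⟨h.feasible_insert hq.le hg hδ hv, ?_, ?_, ?_, ?_, ?_⟩
  · rw [← Finset.insert_Icc_right_eq_Icc_add_one (by omega), Finset.insert_val_of_notMem (by simp),
      Multiset.map_cons, Function.update_self,
      Multiset.map_congr rfl fun i hi => hold i (Finset.mem_Icc.mp hi).2, ← Multiset.map_map,
      h.map_eq, Multiset.map_coe, map_shiftAbove h.sorted, Multiset.cons_coe, Multiset.coe_eq_coe]
    simpa using (List.perm_middle (l₁ := l₁ ++ [u])).symm
  · exact pairwise_insert_map_add h.sorted (by linarith) fun b hb => by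
      linarith [headD_le_of_lt_of_mem (M := M) h.sorted (by simp [hb])
        (List.rel_of_pairwise_cons (List.pairwise_append.mp h.sorted).2.1 hb)]
  · simpa only [List.head?_append, List.head?_cons] using h.head?_eq
  · intro i hi
    rcases Nat.le_add_one_iff.mp (Finset.mem_Icc.mp hi).2 with hi₂ | rfl
    · rw [hold i hi₂, Function.comp_apply]
      linarith [shiftAbove_le (u := u) hδ (t := s i),
        h.completion_le i (Finset.mem_Icc.mpr ⟨(Finset.mem_Icc.mp hi).1, hi₂⟩)]
    · rw [Function.update_self]
      linarith
  · exact h.exists_last_insert hq.le hg hv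

end SortedSchedule

theorem greedyGaps_succ (p : ℕ → ℝ) {j : ℕ} (hj : 1 ≤ j) :
    greedyGaps p (j + 1) = p (j + 1) ::ₘ
      max (p (j + 1)) ((greedyGaps p j).fold max 0 - p (j + 1)) ::ₘ
        (greedyGaps p j).erase ((greedyGaps p j).fold max 0) := by
  obtain ⟨j, rfl⟩ := Nat.exists_eq_add_of_le' hj
  rfl

theorem exists_sortedSchedule_greedyGaps (n : ℕ) (p : ℕ → ℝ)
    (hsort : ∀ i j, 1 ≤ i → i ≤ j → j ≤ n → p j ≤ p i)
    (hpos : ∀ i, 1 ≤ i → i ≤ n → 0 < p i) (j : ℕ) (hj : 1 ≤ j) (hjn : j ≤ n) :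
    ∃ s l M, SortedSchedule p j s l M ∧ (gapList l M : Multiset ℝ) = greedyGaps p j := by
  induction j, hj using Nat.le_induction with
  | base => exact ⟨_, _, _, .single p, by simp [greedyGaps]⟩
  | succ m hm ih =>
    obtain ⟨s, l, M, h, hG⟩ := ih (by omega)
    have hpos' : ∀ i ∈ Finset.Icc 1 m, 0 < p i := fun i hi =>
      hpos i (Finset.mem_Icc.mp hi).1 (by linarith [(Finset.mem_Icc.mp hi).2])
    have hqle : ∀ i ∈ Finset.Icc 1 m, p (m + 1) ≤ p i := fun i hi =>
      hsort i (m + 1) (Finset.mem_Icc.mp hi).1 (by linarith [(Finset.mem_Icc.mp hi).2]) hjn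
    rw [greedyGaps_succ p hm, ← hG]
    generalize hx : (gapList l M : Multiset ℝ).fold max 0 = x
    have hx_mem : x ∈ gapList l M := by
      obtain ⟨t, rfl⟩ := List.head?_eq_some_iff.mp h.head?_eq
      rw [← hx, ← Multiset.mem_coe]
      exact Multiset.fold_max_mem (by simp) fun a ha => (h.gapList_pos hpos' a ha).le
    obtain ⟨l₁, u, R, rfl, hxR⟩ := exists_eq_of_mem_gapList hx_mem
    set q := p (m + 1)
    set g := max q (x - q)
    refine ⟨_, _, _, h.insert (hpos _ (by omega) hjn) hqle (le_max_left q (x - q))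
      (δ := g + q - x) (by linarith [le_max_right q (x - q)]) (by linarith), ?_⟩
    rw [gapList_insert, gapList_append, gapList_cons, ← hxR,
      show u + g - u = g by ring, show R.headD M + (g + q - x) - (u + g) = q by linarith]
    simp only [← Multiset.coe_add, ← Multiset.cons_coe, Multiset.add_cons, Multiset.erase_cons_head]
    exact Multiset.cons_swap _ _ _

/-- for every `j`, there is a feasible schedule for the instance
`p 1, …, p j` whose multiset of gaps equals the Greedy gap multiset `G j`; in
particular there is a feasible schedule for `p 1, …, p n` whose makespan equals the sum
of the elements of `G n`. -/
theorem stmt6 (n : ℕ) (hn : 1 ≤ n) (p : ℕ → ℝ)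
    (hsort : ∀ i j, 1 ≤ i → i ≤ j → j ≤ n → p j ≤ p i)
    (hpos : ∀ i, 1 ≤ i → i ≤ n → 0 < p i) :
    (∀ j, 1 ≤ j → j ≤ n →
      ∃ s : ℕ → ℝ, Feasible j p s ∧ gapMultiset j p s = greedyGaps p j) ∧
    ∃ s : ℕ → ℝ, Feasible n p s ∧ makespan n p s = (greedyGaps p n).sum := by
  refine ⟨fun j hj hjn => ?_, ?_⟩
  · obtain ⟨s, l, M, h, hG⟩ := exists_sortedSchedule_greedyGaps n p hsort hpos j hj hjn
    exact ⟨s, h.feasible, by rw [h.gapMultiset_eq, hG]⟩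
  · obtain ⟨s, l, M, h, hG⟩ := exists_sortedSchedule_greedyGaps n p hsort hpos n hn le_rfl
    exact ⟨s, h.feasible, by rw [h.makespan_eq, ← hG, Multiset.sum_coe, h.sum_gapList]⟩
end

section
/- Let p_1 ≥ p_2 ≥ ... ≥ p_n > 0 be a TS instance whose binary tree ratio satisfies R(p) ≤ 2, i.e., p_{⌈i/2⌉} ≤ 2 p_i for all 2 ≤ i ≤ n. Then for every j with 1 ≤ j ≤ n, the Greedy gap multiset G_j consists of exactly two copies of p_i for each index i with ⌈j/2⌉ + 1 ≤ i ≤ j, together with one additional copy of p_{(j+1)/2} if j is odd. -/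
/-!
When `R(p) ≤ 2`, every job `j` is at least half of the current largest gap `p ⌈j/2⌉`, so
splitting that gap leaves a remainder `p ⌈j/2⌉ - p j ≤ p j` and Greedy simply replaces one
copy of `p ⌈j/2⌉` (its parent in the binary tree) by two copies of `p j`.
-/

namespace Multiset

theorem fold_max_le_iff {α : Type*} [LinearOrder α] {a b : α} {s : Multiset α} :
    s.fold max b ≤ a ↔ b ≤ a ∧ ∀ x ∈ s, x ≤ a := by
  induction s using Multiset.induction with
  | empty => simp
  | cons c t ih => simp only [fold_cons_left, max_le_iff, ih, forall_mem_cons]; tauto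

theorem fold_max_cons_of_forall_le {α : Type*} [LinearOrder α] {a b : α} {s : Multiset α}
    (hb : b ≤ a) (hs : ∀ x ∈ s, x ≤ a) : (a ::ₘ s).fold max b = a := by
  rw [fold_cons_left, max_eq_left (fold_max_le_iff.2 ⟨hb, hs⟩)]

end Multiset

noncomputable def treeGaps (p : ℕ → ℝ) (j : ℕ) : Multiset ℝ :=
  (if Odd j then {p ((j + 1) / 2)} else 0) +
    ∑ i ∈ Finset.Icc ((j + 1) / 2 + 1) j, ({p i, p i} : Multiset ℝ)

theorem treeGaps_one (p : ℕ → ℝ) : treeGaps p 1 = {p 1} := by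
  simp [treeGaps]

theorem exists_mem_Icc_of_mem_treeGaps {p : ℕ → ℝ} {j : ℕ} {y : ℝ} (hy : y ∈ treeGaps p j) :
    ∃ i ∈ Finset.Icc ((j + 2) / 2) j, p i = y := by
  rcases Multiset.mem_add.1 hy with hy | hy
  · split_ifs at hy with hodd
    · refine ⟨(j + 1) / 2, ?_, (Multiset.mem_singleton.1 hy).symm⟩
      obtain ⟨t, rfl⟩ := hodd
      simp only [Finset.mem_Icc]
      omega
    · simp at hy
  · obtain ⟨i, hi, hyi⟩ := Multiset.mem_sum.1 hy
    refine ⟨i, ?_, by simp_all⟩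
    simp only [Finset.mem_Icc] at hi ⊢
    omega

theorem exists_treeGaps_eq_cons (p : ℕ → ℝ) {j : ℕ} (hj : 1 ≤ j) :
    ∃ rest, treeGaps p j = p ((j + 2) / 2) ::ₘ rest ∧
      treeGaps p (j + 1) = p (j + 1) ::ₘ p (j + 1) ::ₘ rest := by
  unfold treeGaps
  rw [Finset.sum_Icc_succ_top (by omega : (j + 2) / 2 + 1 ≤ j + 1)]
  rcases Nat.even_or_odd j with ⟨t, rfl⟩ | ⟨t, rfl⟩
  · have hsplit : Finset.Icc ((t + t + 1) / 2 + 1) (t + t) =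
        insert (t + 1) (Finset.Icc (t + 2) (t + t)) := by
      ext i; simp only [Finset.mem_Icc, Finset.mem_insert]; omega
    refine ⟨p (t + 1) ::ₘ ∑ i ∈ Finset.Icc (t + 2) (t + t), {p i, p i}, ?_, ?_⟩
    · rw [if_neg (by simp), hsplit, Finset.sum_insert (by simp)]
      rw [show (t + t + 2) / 2 = t + 1 by omega]
      simp
    · rw [if_pos (by simp), show (t + t + 1 + 1) / 2 + 1 = t + 2 by omega,
        show (t + t + 1 + 1) / 2 = t + 1 by omega]
      simp [add_comm, Multiset.cons_add]
  · refine ⟨∑ i ∈ Finset.Icc (t + 2) (2 * t + 1), {p i, p i}, ?_, ?_⟩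
    · rw [if_pos (by simp), show (2 * t + 1 + 2) / 2 = t + 1 by omega,
        show (2 * t + 1 + 1) / 2 = t + 1 by omega]
      simp
    · rw [if_neg (by rw [Nat.not_odd_iff_even]; exact ⟨t + 1, by ring⟩),
        show (2 * t + 1 + 1 + 1) / 2 + 1 = t + 2 by omega]
      simp [add_comm]

theorem greedyGaps_succ_of_eq_cons {p : ℕ → ℝ} {j : ℕ} (hj : 1 ≤ j) {a : ℝ}
    {rest : Multiset ℝ} (hG : greedyGaps p j = a ::ₘ rest) (ha : 0 ≤ a)
    (hrest : ∀ y ∈ rest, y ≤ a) (hsplit : a ≤ 2 * p (j + 1)) :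
    greedyGaps p (j + 1) = p (j + 1) ::ₘ p (j + 1) ::ₘ rest := by
  obtain ⟨k, rfl⟩ : ∃ k, j = k + 1 := ⟨j - 1, by omega⟩
  have hmax : (greedyGaps p (k + 1)).fold max 0 = a := by
    rw [hG]; exact Multiset.fold_max_cons_of_forall_le ha hrest
  rw [greedyGaps, hmax, hG, Multiset.erase_cons_head, max_eq_left (by linarith)]

theorem greedyGaps_eq_treeGaps {n : ℕ} {p : ℕ → ℝ}
    (hsort : ∀ i j, 1 ≤ i → i ≤ j → j ≤ n → p j ≤ p i)
    (hpos : ∀ i, 1 ≤ i → i ≤ n → 0 < p i)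
    (hratio : ∀ i, 2 ≤ i → i ≤ n → p ((i + 1) / 2) ≤ 2 * p i) {j : ℕ} (hj : 1 ≤ j)
    (hjn : j ≤ n) : greedyGaps p j = treeGaps p j := by
  induction j, hj using Nat.le_induction with
  | base => rw [treeGaps_one, greedyGaps]
  | succ j hj ih =>
    obtain ⟨rest, hcur, hnext⟩ := exists_treeGaps_eq_cons p hj
    rw [hnext]
    refine greedyGaps_succ_of_eq_cons hj ((ih (by omega)).trans hcur)
      (hpos _ (by omega) (by omega)).le (fun y hy => ?_) (hratio (j + 1) (by omega) hjn)
    obtain ⟨i, hi, rfl⟩ :=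
      exists_mem_Icc_of_mem_treeGaps (hcur ▸ Multiset.mem_cons_of_mem hy)
    rw [Finset.mem_Icc] at hi
    exact hsort _ i (by omega) hi.1 (by omega)

theorem stmt7_general (n : ℕ) (p : ℕ → ℝ)
    (hsort : ∀ i j, 1 ≤ i → i ≤ j → j ≤ n → p j ≤ p i)
    (hpos : ∀ i, 1 ≤ i → i ≤ n → 0 < p i)
    (hratio : ∀ i, 2 ≤ i → i ≤ n → p ((i + 1) / 2) ≤ 2 * p i) :
    ∀ j, 1 ≤ j → j ≤ n →
      greedyGaps p j =
        (if Odd j then ({p ((j + 1) / 2)} : Multiset ℝ) else 0) +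
          ∑ i ∈ Finset.Icc ((j + 1) / 2 + 1) j, ({p i, p i} : Multiset ℝ) :=
  fun _ hj hjn => greedyGaps_eq_treeGaps hsort hpos hratio hj hjn

/-- if the binary tree ratio is at most 2 (`p ⌈i/2⌉ ≤ 2 p i` for all
`2 ≤ i ≤ n`), then for every `j` the Greedy gap multiset `G j` consists of two copies of
`p i` for each `⌈j/2⌉ + 1 ≤ i ≤ j`, plus one copy of `p ((j+1)/2)` if `j` is odd.
(Note `⌈i/2⌉ = (i+1)/2` with natural division.) -/
theorem stmt7 (n : ℕ) (hn : 1 ≤ n) (p : ℕ → ℝ)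
    (hsort : ∀ i j, 1 ≤ i → i ≤ j → j ≤ n → p j ≤ p i)
    (hpos : ∀ i, 1 ≤ i → i ≤ n → 0 < p i)
    (hratio : ∀ i, 2 ≤ i → i ≤ n → p ((i + 1) / 2) ≤ 2 * p i) :
    ∀ j, 1 ≤ j → j ≤ n →
      greedyGaps p j =
        (if Odd j then ({p ((j + 1) / 2)} : Multiset ℝ) else 0) +
          ∑ i ∈ Finset.Icc ((j + 1) / 2 + 1) j, ({p i, p i} : Multiset ℝ) :=
  stmt7_general n p hsort hpos hratio
end

section
/- Let n ≥ 1, let D ≥ 4 and M ≥ 5D/4 be integers, and let a_1, ..., a_n, b_1, ..., b_n, c_1, ..., c_n be integers with D/4 < a_i, b_i, c_i < D/2 for all i and with Σ_{i=1}^n (a_i + b_i + c_i) = nD. Consider the TS instance consisting of 5n jobs: n jobs of size 8M + 5D, n jobs of size 4M, and for every i one job of size 2M + 2a_i + D, one job of size 2M + b_i, and one job of size M + c_i + D. If there exist permutations σ and τ of {1, ..., n} such that a_i + b_{σ(i)} + c_{τ(i)} = D for all i, then this TS instance admits a feasible schedule of makespan n(8M + 5D). -/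
/-- The sizes of the `5n` jobs of the reduction instance: for each `i : Fin n`, one job
of each of the sizes `8M + 5D`, `4M`, `2M + 2aᵢ + D`, `2M + bᵢ`, `M + cᵢ + D`. -/
noncomputable def jobSize {n : ℕ} (M D : ℤ) (a b c : Fin n → ℤ) (i : Fin n) :
    Fin 5 → ℝ :=
  ![((8 * M + 5 * D : ℤ) : ℝ), ((4 * M : ℤ) : ℝ), ((2 * M + 2 * a i + D : ℤ) : ℝ),
    ((2 * M + b i : ℤ) : ℝ), ((M + c i + D : ℤ) : ℝ)]

/-!
Every triple `(a j, b (σ j), c (τ j))` of the matching gets its own block of length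
`L = 8M + 5D`, and the `n` blocks are placed side by side. Inside a block the long job starts
at `0`; the jobs of sizes `P = 2M + 2α + D` and `Q = M + γ + D` and the `4M` job start at
`P`, `P + Q`, `P + 2Q`, so consecutive ones are separated by the smaller size; the job of size
`2M + β` is right-aligned at `L`, and it clears the `4M` job precisely because
`α + β + γ ≤ D`. Every job ends inside its block, so jobs of different blocks never conflict,
and the long job of the last block ends at `n L`.
-/

open Function Set

def TriangleFeasible {ι : Type*} (p s : ι → ℝ) : Prop :=
  Pairwise fun x y => min (p x) (p y) ≤ |s x - s y|

theorem TriangleFeasible.comp {ι κ : Type*} {p s : ι → ℝ} (h : TriangleFeasible p s)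
    {f : κ → ι} (hf : Injective f) : TriangleFeasible (p ∘ f) (s ∘ f) :=
  fun _ _ hxy => h (hf.ne hxy)

section Stacking

variable {n : ℕ} {κ : Type*} {L : ℝ} {o p : Fin n → κ → ℝ}

def stackedStart (L : ℝ) (o : Fin n → κ → ℝ) (x : Fin n × κ) : ℝ :=
  x.1 * L + o x.1 x.2

theorem stackedStart_nonneg (hL : 0 ≤ L) (ho : ∀ j k, 0 ≤ o j k) (x : Fin n × κ) :
    0 ≤ stackedStart L o x :=
  add_nonneg (mul_nonneg (Nat.cast_nonneg _) hL) (ho _ _)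

theorem stackedStart_add_le (hfit : ∀ j k, o j k + p j k ≤ L) (x : Fin n × κ) :
    stackedStart L o x + p x.1 x.2 ≤ (x.1 + 1 : ℕ) * L := by
  have := hfit x.1 x.2
  push_cast
  unfold stackedStart
  linarith

theorem stackedStart_add_le_stackedStart (hL : 0 ≤ L) (ho : ∀ j k, 0 ≤ o j k)
    (hfit : ∀ j k, o j k + p j k ≤ L) {x y : Fin n × κ} (hxy : x.1 < y.1) :
    stackedStart L o x + p x.1 x.2 ≤ stackedStart L o y := by
  have hle : ((x.1 + 1 : ℕ) : ℝ) ≤ y.1 := by exact_mod_cast hxy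
  calc stackedStart L o x + p x.1 x.2 ≤ (x.1 + 1 : ℕ) * L := stackedStart_add_le hfit x
    _ ≤ y.1 * L := mul_le_mul_of_nonneg_right hle hL
    _ ≤ stackedStart L o y := le_add_of_nonneg_right (ho _ _)

theorem triangleFeasible_stackedStart (hL : 0 ≤ L) (hblock : ∀ j, TriangleFeasible (p j) (o j))
    (ho : ∀ j k, 0 ≤ o j k) (hfit : ∀ j k, o j k + p j k ≤ L) :
    TriangleFeasible (fun x : Fin n × κ => p x.1 x.2) (stackedStart L o) := by
  have hlt (x y : Fin n × κ) (hxy : x.1 < y.1) :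
      min (p x.1 x.2) (p y.1 y.2) ≤ |stackedStart L o x - stackedStart L o y| := by
    have := stackedStart_add_le_stackedStart hL ho hfit hxy
    rw [abs_sub_comm]
    exact min_le_of_left_le (le_abs.mpr (Or.inl (by linarith)))
  rintro ⟨j, k⟩ ⟨j', k'⟩ hne
  rcases lt_trichotomy j j' with h | rfl | h
  · exact hlt _ _ h
  · have hk : k ≠ k' := fun hk => hne (hk ▸ rfl)
    simpa [stackedStart] using hblock j hk
  · simpa only [min_comm, abs_sub_comm] using hlt (j', k') (j, k) h

theorem isGreatest_stackedStart_add (hL : 0 ≤ L) (hfit : ∀ j k, o j k + p j k ≤ L)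
    {j₀ : Fin n} (hj₀ : (j₀ : ℕ) + 1 = n) {k₀ : κ} (hk₀ : o j₀ k₀ + p j₀ k₀ = L) :
    IsGreatest (range fun x : Fin n × κ => stackedStart L o x + p x.1 x.2) (n * L) := by
  refine ⟨⟨(j₀, k₀), ?_⟩, ?_⟩
  · simp only [stackedStart, ← hj₀]
    push_cast
    linarith
  · rintro _ ⟨x, rfl⟩
    refine (stackedStart_add_le hfit x).trans (mul_le_mul_of_nonneg_right ?_ hL)
    exact_mod_cast x.1.isLt

end Stacking

section Block

variable {M D α β γ : ℝ}

noncomputable def blockSize (M D α β γ : ℝ) : Fin 5 → ℝ :=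
  ![8 * M + 5 * D, 4 * M, 2 * M + 2 * α + D, 2 * M + β, M + γ + D]

noncomputable def blockOffset (M D α β γ : ℝ) : Fin 5 → ℝ :=
  ![0, 4 * M + 2 * α + 2 * γ + 3 * D, 2 * M + 2 * α + D, 6 * M + 5 * D - β,
    3 * M + 2 * α + γ + 2 * D]

theorem triangleFeasible_block (hM : 0 ≤ M) (hα : 0 ≤ α) (hβ : 0 ≤ β) (hγ : 0 ≤ γ)
    (hαD : 2 * α ≤ D) (hsum : α + β + γ ≤ D) :
    TriangleFeasible (blockSize M D α β γ) (blockOffset M D α β γ) := by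
  intro k k' hk
  fin_cases k <;> fin_cases k' <;>
    simp only [blockSize, blockOffset, Fin.reduceFinMk, Matrix.cons_val] <;>
  first
  | exact absurd rfl hk
  | exact min_le_of_left_le (le_abs.mpr (Or.inl (by linarith)))
  | exact min_le_of_left_le (le_abs.mpr (Or.inr (by linarith)))
  | exact min_le_of_right_le (le_abs.mpr (Or.inl (by linarith)))
  | exact min_le_of_right_le (le_abs.mpr (Or.inr (by linarith)))

theorem blockOffset_nonneg (hM : 0 ≤ M) (hα : 0 ≤ α) (hβ : 0 ≤ β) (hγ : 0 ≤ γ)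
    (hsum : α + β + γ ≤ D) (k : Fin 5) : 0 ≤ blockOffset M D α β γ k := by
  fin_cases k <;> simp only [blockOffset, Fin.reduceFinMk, Matrix.cons_val] <;> linarith

theorem blockOffset_add_blockSize_le (hM : 0 ≤ M) (hα : 0 ≤ α) (hβ : 0 ≤ β)
    (hαD : 2 * α ≤ D) (hsum : α + β + γ ≤ D) (k : Fin 5) :
    blockOffset M D α β γ k + blockSize M D α β γ k ≤ 8 * M + 5 * D := by
  fin_cases k <;> simp only [blockOffset, blockSize, Fin.reduceFinMk, Matrix.cons_val] <;> linarith

end Block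

/-- Block `j` holds the triple `(a j, b (σ j), c (τ j))`: its slot `k` is the job
`(slotPerm σ τ k j, k)`. -/
def slotPerm {n : ℕ} (σ τ : Equiv.Perm (Fin n)) : Fin 5 → Equiv.Perm (Fin n) :=
  ![1, 1, 1, σ, τ]

theorem jobSize_slotPerm {n : ℕ} (M D : ℤ) (a b c : Fin n → ℤ) (σ τ : Equiv.Perm (Fin n))
    (j : Fin n) (k : Fin 5) :
    jobSize M D a b c (slotPerm σ τ k j) k = blockSize M D (a j) (b (σ j)) (c (τ j)) k := by
  fin_cases k <;>
    simp only [jobSize, slotPerm, blockSize, Fin.reduceFinMk, Matrix.cons_val,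
      Equiv.Perm.one_apply] <;> push_cast <;> ring

theorem stmt10_general (n : ℕ) (hn : 1 ≤ n) (M D : ℤ) (hD : 4 ≤ D)
    (hM : 5 * (D : ℝ) / 4 ≤ (M : ℝ))
    (a b c : Fin n → ℤ)
    (ha : ∀ i, (D : ℝ) / 4 < (a i : ℝ) ∧ (a i : ℝ) < (D : ℝ) / 2)
    (hb : ∀ i, (D : ℝ) / 4 < (b i : ℝ) ∧ (b i : ℝ) < (D : ℝ) / 2)
    (hc : ∀ i, (D : ℝ) / 4 < (c i : ℝ) ∧ (c i : ℝ) < (D : ℝ) / 2)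
    (σ τ : Equiv.Perm (Fin n))
    (hmatch : ∀ i, a i + b (σ i) + c (τ i) = D) :
    ∃ s : Fin n → Fin 5 → ℝ,
      (∀ i k, 0 ≤ s i k) ∧
      (∀ i k i' k', (i, k) ≠ (i', k') →
        min (jobSize M D a b c i k) (jobSize M D a b c i' k')
          ≤ |s i k - s i' k'|) ∧
      sSup (Set.range fun jk : Fin n × Fin 5 =>
          s jk.1 jk.2 + jobSize M D a b c jk.1 jk.2)
        = (n : ℝ) * (8 * (M : ℝ) + 5 * (D : ℝ)) := by
  have hD₀ : (0 : ℝ) ≤ D := by exact_mod_cast (by omega : (0 : ℤ) ≤ D)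
  have hM₀ : (0 : ℝ) ≤ M := by linarith
  have hL : (0 : ℝ) ≤ 8 * M + 5 * D := by linarith
  have hblock (j : Fin n) : 0 ≤ (a j : ℝ) ∧ 0 ≤ (b (σ j) : ℝ) ∧ 0 ≤ (c (τ j) : ℝ) ∧
      2 * (a j : ℝ) ≤ D ∧ (a j : ℝ) + b (σ j) + c (τ j) ≤ D := by
    have hsum : ((a j + b (σ j) + c (τ j) : ℤ) : ℝ) = D := by exact_mod_cast hmatch j
    push_cast at hsum
    obtain ⟨ha₁, ha₂⟩ := ha j
    obtain ⟨hb₁, -⟩ := hb (σ j)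
    obtain ⟨hc₁, -⟩ := hc (τ j)
    exact ⟨by linarith, by linarith, by linarith, by linarith, hsum.le⟩
  set o : Fin n → Fin 5 → ℝ := fun j => blockOffset M D (a j) (b (σ j)) (c (τ j))
  set p : Fin n → Fin 5 → ℝ := fun j => blockSize M D (a j) (b (σ j)) (c (τ j))
  have ho (j k) : 0 ≤ o j k :=
    have ⟨hα, hβ, hγ, _, hsum⟩ := hblock j; blockOffset_nonneg hM₀ hα hβ hγ hsum k
  have hfit (j k) : o j k + p j k ≤ 8 * M + 5 * D :=
    have ⟨hα, hβ, _, hαD, hsum⟩ := hblock j; blockOffset_add_blockSize_le hM₀ hα hβ hαD hsum k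
  have hfeas : TriangleFeasible (fun x : Fin n × Fin 5 => p x.1 x.2) (stackedStart _ o) :=
    triangleFeasible_stackedStart hL (fun j =>
      have ⟨hα, hβ, hγ, hαD, hsum⟩ := hblock j; triangleFeasible_block hM₀ hα hβ hγ hαD hsum)
      ho hfit
  let slot : Fin n × Fin 5 ≃ Fin n × Fin 5 := Equiv.prodCongrLeft fun k => (slotPerm σ τ k).symm
  have hsize (i k) : jobSize M D a b c i k = p (slot (i, k)).1 (slot (i, k)).2 := by
    simpa [slot, p] using jobSize_slotPerm M D a b c σ τ ((slotPerm σ τ k).symm i) k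
  refine ⟨fun i k => stackedStart _ o (slot (i, k)), fun i k => stackedStart_nonneg hL ho _,
    fun i k i' k' hne => ?_, ?_⟩
  · simpa only [hsize, comp_apply] using hfeas.comp slot.injective hne
  · have hlast := isGreatest_stackedStart_add hL hfit (j₀ := ⟨n - 1, by omega⟩)
      (Nat.sub_add_cancel hn) (k₀ := 0) (by simp [o, p, blockOffset, blockSize])
    rw [← slot.surjective.range_comp] at hlast
    simpa only [hsize, comp_def, Prod.mk.eta] using hlast.csSup_eq

/-- easy direction of the reduction: if the numerical 3-dimensional
matching instance has a solution, then the TS instance of the reduction admits a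
feasible schedule of makespan `n (8M + 5D)`. -/
theorem stmt10 (n : ℕ) (hn : 1 ≤ n) (M D : ℤ) (hD : 4 ≤ D)
    (hM : 5 * (D : ℝ) / 4 ≤ (M : ℝ))
    (a b c : Fin n → ℤ)
    (ha : ∀ i, (D : ℝ) / 4 < (a i : ℝ) ∧ (a i : ℝ) < (D : ℝ) / 2)
    (hb : ∀ i, (D : ℝ) / 4 < (b i : ℝ) ∧ (b i : ℝ) < (D : ℝ) / 2)
    (hc : ∀ i, (D : ℝ) / 4 < (c i : ℝ) ∧ (c i : ℝ) < (D : ℝ) / 2)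
    (hsum : ∑ i, (a i + b i + c i) = n * D)
    (σ τ : Equiv.Perm (Fin n))
    (hmatch : ∀ i, a i + b (σ i) + c (τ i) = D) :
    ∃ s : Fin n → Fin 5 → ℝ,
      (∀ i k, 0 ≤ s i k) ∧
      (∀ i k i' k', (i, k) ≠ (i', k') →
        min (jobSize M D a b c i k) (jobSize M D a b c i' k')
          ≤ |s i k - s i' k'|) ∧
      sSup (Set.range fun jk : Fin n × Fin 5 =>
          s jk.1 jk.2 + jobSize M D a b c jk.1 jk.2)
        = (n : ℝ) * (8 * (M : ℝ) + 5 * (D : ℝ)) :=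
  stmt10_general n hn M D hD hM a b c ha hb hc σ τ hmatch
end
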